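/- (One-step descent inequality.) Let β > 0, 0 < η ≤ 1, y ∈ ℝ^d, W ∈ Δ^p, and let W⋆ ∈ Δ^p satisfy 𝒜W⋆ = v. Let G = C + 𝒜ᵀy + β𝒜ᵀ(𝒜W − v), let H ∈ Δ^p be a minimizer of Z ↦ Tr(G Z) over Δ^p, and set W′ = (1 − η)W + ηH. Then L_β(W′; y) − Tr(C W⋆) ≤ (1 − η)(L_β(W; y) − Tr(C W⋆)) − (βη/2)‖𝒜W − v‖² + (βη²/2)‖𝒜‖² p². -/

import Mathlib

open scoped BigOperators

noncomputable section

/-- A binary (0/1-valued) vector. -/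
def binaryVec {ι : Type*} (x : ι → ℝ) : Prop := ∀ i, x i = 0 ∨ x i = 1

/-- `Δ^p`: the convex hull of the rank-one binary matrices `x xᵀ`, `x ∈ {0,1}^p`. -/
def CPdelta (ι : Type*) [Fintype ι] : Set (Matrix ι ι ℝ) :=
  convexHull ℝ {M | ∃ x : ι → ℝ, binaryVec x ∧ M = Matrix.vecMulVec x x}

/-- Frobenius inner product of matrices. -/
def frobInner {ι : Type*} [Fintype ι] (A B : Matrix ι ι ℝ) : ℝ := ∑ i, ∑ j, A i j * B i j

/-- Frobenius norm of a matrix. -/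
def frobNorm {ι : Type*} [Fintype ι] (A : Matrix ι ι ℝ) : ℝ :=
  Real.sqrt (∑ i, ∑ j, (A i j) ^ 2)

/-- Operator norm `‖𝒜‖ = sup {‖𝒜X‖ : ‖X‖_F ≤ 1}` of a linear map from matrices
(with the Frobenius norm) to `ℝ^d` (with the Euclidean norm). -/
def opNorm {p d : ℕ} (A : Matrix (Fin p) (Fin p) ℝ →ₗ[ℝ] EuclideanSpace ℝ (Fin d)) : ℝ :=
  sSup {r : ℝ | ∃ X : Matrix (Fin p) (Fin p) ℝ, frobNorm X ≤ 1 ∧ r = ‖A X‖}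

/-- The augmented Lagrangian `L_β(W; y) = Tr(C W) + yᵀ(𝒜W - v) + (β/2)‖𝒜W - v‖²`. -/
def Lag {p d : ℕ} (C : Matrix (Fin p) (Fin p) ℝ)
    (A : Matrix (Fin p) (Fin p) ℝ →ₗ[ℝ] EuclideanSpace ℝ (Fin d))
    (v : EuclideanSpace ℝ (Fin d)) (β : ℝ)
    (W : Matrix (Fin p) (Fin p) ℝ) (y : EuclideanSpace ℝ (Fin d)) : ℝ :=
  Matrix.trace (C * W) + (∑ i, y i * (A W - v) i) + β / 2 * ‖A W - v‖ ^ 2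

/-! Along the segment `W + η (H - W)` the augmented Lagrangian is a quadratic in `η`. Its linear
coefficient is the directional derivative `Tr(G (H - W))`; minimality of `H` bounds it by
`Tr(G (W⋆ - W))`, which feasibility of `W⋆` turns into `Tr(C W⋆) - L_β(W; y) - (β/2)‖𝒜W - v‖²`.
Its quadratic coefficient is `(β/2)‖𝒜(H - W)‖² ≤ (β/2)‖𝒜‖² p²`, because the entries of matrices
in `Δ^p` lie in `[0, 1]`, so `‖H - W‖_F ≤ p`. -/

open Matrix
open scoped InnerProductSpace

section CPdelta

variable {ι : Type*} [Fintype ι] {M : Matrix ι ι ℝ}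

theorem isSymm_of_mem_CPdelta (hM : M ∈ CPdelta ι) : M.IsSymm := by
  refine convexHull_min (t := {M | M.IsSymm}) ?_ ?_ hM
  · rintro _ ⟨x, -, rfl⟩
    exact transpose_vecMulVec x x
  · intro M hM N hN a b _ _ _
    exact (IsSymm.smul hM a).add (IsSymm.smul hN b)

theorem apply_mem_Icc_of_mem_CPdelta (hM : M ∈ CPdelta ι) (i j : ι) :
    M i j ∈ Set.Icc (0 : ℝ) 1 := by
  refine convexHull_min (t := entryLinearMap ℝ ℝ i j ⁻¹' Set.Icc 0 1) ?_
    ((convex_Icc 0 1).linear_preimage _) hM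
  rintro _ ⟨x, hx, rfl⟩
  rcases hx i with h1 | h1 <;> rcases hx j with h2 | h2 <;> simp [vecMulVec_apply, h1, h2]

theorem abs_sub_apply_le_one_of_mem_CPdelta {N : Matrix ι ι ℝ} (hM : M ∈ CPdelta ι)
    (hN : N ∈ CPdelta ι) (i j : ι) : |(M - N) i j| ≤ 1 := by
  have hMij := apply_mem_Icc_of_mem_CPdelta hM i j
  have hNij := apply_mem_Icc_of_mem_CPdelta hN i j
  rw [Matrix.sub_apply, abs_le]
  constructor <;> linarith [hMij.1, hMij.2, hNij.1, hNij.2]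

end CPdelta

section Frobenius

variable {ι : Type*} [Fintype ι]

theorem trace_mul_eq_frobInner {M X : Matrix ι ι ℝ} (hX : X.IsSymm) :
    trace (M * X) = frobInner M X := by
  simp only [trace, diag, mul_apply, frobInner]
  exact Finset.sum_congr rfl fun i _ => Finset.sum_congr rfl fun j _ => by rw [hX.apply i j]

theorem frobNorm_le_card {X : Matrix ι ι ℝ} (hX : ∀ i j, |X i j| ≤ 1) :
    frobNorm X ≤ Fintype.card ι := by
  have hsum : ∑ i, ∑ j, X i j ^ 2 ≤ (Fintype.card ι : ℝ) ^ 2 := by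
    calc ∑ i, ∑ j, X i j ^ 2 ≤ ∑ _i : ι, ∑ _j : ι, (1 : ℝ) := by
          gcongr with i _ j _
          exact (sq_le_one_iff_abs_le_one _).mpr (hX i j)
      _ = (Fintype.card ι : ℝ) ^ 2 := by simp [sq]
  exact Real.sqrt_le_left (Nat.cast_nonneg _) |>.mpr hsum

variable (ι) in
def euclideanEquivMatrix : EuclideanSpace ℝ (ι × ι) ≃ₗ[ℝ] Matrix ι ι ℝ :=
  (WithLp.linearEquiv 2 ℝ (ι × ι → ℝ)).trans (LinearEquiv.curry ℝ ℝ ι ι)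

theorem frobNorm_euclideanEquivMatrix (x : EuclideanSpace ℝ (ι × ι)) :
    frobNorm (euclideanEquivMatrix ι x) = ‖x‖ := by
  simp only [frobNorm, EuclideanSpace.norm_eq, Fintype.sum_prod_type, Real.norm_eq_abs, sq_abs]
  rfl

theorem opNorm_eq_norm_comp_euclideanEquivMatrix {p d : ℕ}
    (A : Matrix (Fin p) (Fin p) ℝ →ₗ[ℝ] EuclideanSpace ℝ (Fin d)) :
    opNorm A =
      ‖LinearMap.toContinuousLinearMap (A ∘ₗ (euclideanEquivMatrix (Fin p)).toLinearMap)‖ := by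
  rw [← ContinuousLinearMap.sSup_unitClosedBall_eq_norm, opNorm]
  congr 1
  ext r
  constructor
  · rintro ⟨X, hX, rfl⟩
    refine ⟨(euclideanEquivMatrix (Fin p)).symm X, ?_, by simp⟩
    rwa [mem_closedBall_zero_iff, ← frobNorm_euclideanEquivMatrix, LinearEquiv.apply_symm_apply]
  · rintro ⟨x, hx, rfl⟩
    refine ⟨euclideanEquivMatrix (Fin p) x, ?_, rfl⟩
    rwa [frobNorm_euclideanEquivMatrix, ← mem_closedBall_zero_iff]

theorem norm_apply_le_opNorm_mul_frobNorm {p d : ℕ}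
    (A : Matrix (Fin p) (Fin p) ℝ →ₗ[ℝ] EuclideanSpace ℝ (Fin d)) (X : Matrix (Fin p) (Fin p) ℝ) :
    ‖A X‖ ≤ opNorm A * frobNorm X := by
  obtain ⟨x, rfl⟩ := (euclideanEquivMatrix (Fin p)).surjective X
  rw [opNorm_eq_norm_comp_euclideanEquivMatrix, frobNorm_euclideanEquivMatrix]
  exact (LinearMap.toContinuousLinearMap (A ∘ₗ _)).le_opNorm x

end Frobenius

theorem EuclideanSpace.real_inner_eq_sum_mul {n : Type*} [Fintype n] (x y : EuclideanSpace ℝ n) :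
    ⟪x, y⟫_ℝ = ∑ i, x i * y i := by
  simp [PiLp.inner_apply, mul_comm]

section Lagrangian

variable {p d : ℕ} (C : Matrix (Fin p) (Fin p) ℝ)
  (A : Matrix (Fin p) (Fin p) ℝ →ₗ[ℝ] EuclideanSpace ℝ (Fin d))
  (v : EuclideanSpace ℝ (Fin d)) (β : ℝ) (W : Matrix (Fin p) (Fin p) ℝ)
  (y : EuclideanSpace ℝ (Fin d))

def lagDeriv (Δ : Matrix (Fin p) (Fin p) ℝ) : ℝ :=
  trace (C * Δ) + ⟪y + β • (A W - v), A Δ⟫_ℝ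

theorem Lag_eq_inner :
    Lag C A v β W y = trace (C * W) + ⟪y, A W - v⟫_ℝ + β / 2 * ‖A W - v‖ ^ 2 := by
  rw [Lag, EuclideanSpace.real_inner_eq_sum_mul]

theorem lagDeriv_sub (Δ Δ' : Matrix (Fin p) (Fin p) ℝ) :
    lagDeriv C A v β W y (Δ - Δ') = lagDeriv C A v β W y Δ - lagDeriv C A v β W y Δ' := by
  simp only [lagDeriv, Matrix.mul_sub, trace_sub, map_sub, inner_sub_right]
  ring

theorem Lag_add_smul (η : ℝ) (Δ : Matrix (Fin p) (Fin p) ℝ) :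
    Lag C A v β (W + η • Δ) y =
      Lag C A v β W y + η * lagDeriv C A v β W y Δ + β * η ^ 2 / 2 * ‖A Δ‖ ^ 2 := by
  have hres : A (W + η • Δ) - v = (A W - v) + η • A Δ := by
    rw [map_add, map_smul]
    abel
  simp only [Lag_eq_inner, lagDeriv, hres, norm_add_sq_real, norm_smul, inner_add_left,
    inner_add_right, inner_smul_left, inner_smul_right, Matrix.mul_add, Matrix.mul_smul,
    trace_add, trace_smul, smul_eq_mul, Real.norm_eq_abs, mul_pow, sq_abs, RCLike.conj_to_real]
  ring

theorem lagDeriv_sub_eq_of_feasible {Wstar : Matrix (Fin p) (Fin p) ℝ} (hfeas : A Wstar = v) :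
    lagDeriv C A v β W y (Wstar - W) =
      trace (C * Wstar) - Lag C A v β W y - β / 2 * ‖A W - v‖ ^ 2 := by
  have hres : A (Wstar - W) = -(A W - v) := by
    rw [map_sub, hfeas]
    abel
  rw [lagDeriv, Lag_eq_inner, hres, inner_neg_right, inner_add_left, inner_smul_left,
    real_inner_self_eq_norm_sq, Matrix.mul_sub, trace_sub]
  simp only [RCLike.conj_to_real]
  ring

variable {C A v β W y}

theorem trace_gradient_mul_eq_lagDeriv
    {Aadj : EuclideanSpace ℝ (Fin d) →ₗ[ℝ] Matrix (Fin p) (Fin p) ℝ}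
    (hadj : ∀ (X : Matrix (Fin p) (Fin p) ℝ) (z : EuclideanSpace ℝ (Fin d)),
      (∑ i, A X i * z i) = frobInner (Aadj z) X)
    {Z : Matrix (Fin p) (Fin p) ℝ} (hZ : Z.IsSymm) :
    trace ((C + Aadj y + β • Aadj (A W - v)) * Z) = lagDeriv C A v β W y Z := by
  rw [add_assoc, ← map_smul, ← map_add, Matrix.add_mul, trace_add,
    trace_mul_eq_frobInner (M := Aadj _) hZ, ← hadj, ← EuclideanSpace.real_inner_eq_sum_mul,
    real_inner_comm, lagDeriv]

theorem lagDeriv_sub_le_of_trace_le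
    {Aadj : EuclideanSpace ℝ (Fin d) →ₗ[ℝ] Matrix (Fin p) (Fin p) ℝ}
    (hadj : ∀ (X : Matrix (Fin p) (Fin p) ℝ) (z : EuclideanSpace ℝ (Fin d)),
      (∑ i, A X i * z i) = frobInner (Aadj z) X)
    {H Z : Matrix (Fin p) (Fin p) ℝ} (hH : H.IsSymm) (hZ : Z.IsSymm)
    (hmin : trace ((C + Aadj y + β • Aadj (A W - v)) * H) ≤
      trace ((C + Aadj y + β • Aadj (A W - v)) * Z)) :
    lagDeriv C A v β W y (H - W) ≤ lagDeriv C A v β W y (Z - W) := by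
  rw [trace_gradient_mul_eq_lagDeriv hadj hH, trace_gradient_mul_eq_lagDeriv hadj hZ] at hmin
  rw [lagDeriv_sub, lagDeriv_sub]
  exact sub_le_sub_right hmin _

end Lagrangian

theorem norm_apply_sub_le_of_mem_CPdelta {p d : ℕ}
    (A : Matrix (Fin p) (Fin p) ℝ →ₗ[ℝ] EuclideanSpace ℝ (Fin d)) {H W : Matrix (Fin p) (Fin p) ℝ}
    (hH : H ∈ CPdelta (Fin p)) (hW : W ∈ CPdelta (Fin p)) :
    ‖A (H - W)‖ ≤ opNorm A * p := by
  have hdiam : frobNorm (H - W) ≤ p := by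
    simpa using frobNorm_le_card (abs_sub_apply_le_one_of_mem_CPdelta hH hW)
  have hA : 0 ≤ opNorm A := by
    rw [opNorm_eq_norm_comp_euclideanEquivMatrix]
    exact norm_nonneg _
  exact (norm_apply_le_opNorm_mul_frobNorm A _).trans (mul_le_mul_of_nonneg_left hdiam hA)

theorem fw_one_step_descent_general
    {p d : ℕ}
    (C : Matrix (Fin p) (Fin p) ℝ)
    (A : Matrix (Fin p) (Fin p) ℝ →ₗ[ℝ] EuclideanSpace ℝ (Fin d))
    (Aadj : EuclideanSpace ℝ (Fin d) →ₗ[ℝ] Matrix (Fin p) (Fin p) ℝ)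
    (hadj : ∀ (X : Matrix (Fin p) (Fin p) ℝ) (z : EuclideanSpace ℝ (Fin d)),
      (∑ i, A X i * z i) = frobInner (Aadj z) X)
    (v : EuclideanSpace ℝ (Fin d))
    (β : ℝ) (hβ : 0 < β) (η : ℝ) (hη0 : 0 < η)
    (y : EuclideanSpace ℝ (Fin d))
    (W : Matrix (Fin p) (Fin p) ℝ) (hW : W ∈ CPdelta (Fin p))
    (Wstar : Matrix (Fin p) (Fin p) ℝ) (hWstar : Wstar ∈ CPdelta (Fin p))
    (hfeas : A Wstar = v)
    (H : Matrix (Fin p) (Fin p) ℝ) (hHmem : H ∈ CPdelta (Fin p))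
    -- `H` minimizes `Z ↦ Tr(G Z)` over `Δ^p`, where `G = C + 𝒜ᵀy + β 𝒜ᵀ(𝒜W - v)`
    (hHmin : ∀ Z ∈ CPdelta (Fin p),
      Matrix.trace ((C + Aadj y + β • Aadj (A W - v)) * H) ≤
        Matrix.trace ((C + Aadj y + β • Aadj (A W - v)) * Z)) :
    Lag C A v β ((1 - η) • W + η • H) y - Matrix.trace (C * Wstar) ≤
      (1 - η) * (Lag C A v β W y - Matrix.trace (C * Wstar)) -
        β * η / 2 * ‖A W - v‖ ^ 2 + β * η ^ 2 / 2 * opNorm A ^ 2 * (p : ℝ) ^ 2 := by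
  have hstep : (1 - η) • W + η • H = W + η • (H - W) := by module
  have hdescent : lagDeriv C A v β W y (H - W) ≤
      trace (C * Wstar) - Lag C A v β W y - β / 2 * ‖A W - v‖ ^ 2 :=
    (lagDeriv_sub_le_of_trace_le hadj (isSymm_of_mem_CPdelta hHmem)
      (isSymm_of_mem_CPdelta hWstar) (hHmin Wstar hWstar)).trans_eq
      (lagDeriv_sub_eq_of_feasible C A v β W y hfeas)
  have hcurvature : ‖A (H - W)‖ ^ 2 ≤ (opNorm A * p) ^ 2 :=
    pow_le_pow_left₀ (norm_nonneg _) (norm_apply_sub_le_of_mem_CPdelta A hHmem hW) 2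
  rw [hstep, Lag_add_smul]
  linarith [mul_le_mul_of_nonneg_left hdescent hη0.le,
    mul_le_mul_of_nonneg_left hcurvature (by positivity : 0 ≤ β * η ^ 2 / 2)]

/-- One-step descent inequality for the Frank-Wolfe step on the
augmented Lagrangian. -/
theorem fw_one_step_descent
    {p d : ℕ} (hp : 0 < p)
    (C : Matrix (Fin p) (Fin p) ℝ) (hC : C.IsSymm)
    (A : Matrix (Fin p) (Fin p) ℝ →ₗ[ℝ] EuclideanSpace ℝ (Fin d))
    (Aadj : EuclideanSpace ℝ (Fin d) →ₗ[ℝ] Matrix (Fin p) (Fin p) ℝ)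
    (hadj : ∀ (X : Matrix (Fin p) (Fin p) ℝ) (z : EuclideanSpace ℝ (Fin d)),
      (∑ i, A X i * z i) = frobInner (Aadj z) X)
    (v : EuclideanSpace ℝ (Fin d))
    (β : ℝ) (hβ : 0 < β) (η : ℝ) (hη0 : 0 < η) (hη1 : η ≤ 1)
    (y : EuclideanSpace ℝ (Fin d))
    (W : Matrix (Fin p) (Fin p) ℝ) (hW : W ∈ CPdelta (Fin p))
    (Wstar : Matrix (Fin p) (Fin p) ℝ) (hWstar : Wstar ∈ CPdelta (Fin p))
    (hfeas : A Wstar = v)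
    (H : Matrix (Fin p) (Fin p) ℝ) (hHmem : H ∈ CPdelta (Fin p))
    -- `H` minimizes `Z ↦ Tr(G Z)` over `Δ^p`, where `G = C + 𝒜ᵀy + β 𝒜ᵀ(𝒜W - v)`
    (hHmin : ∀ Z ∈ CPdelta (Fin p),
      Matrix.trace ((C + Aadj y + β • Aadj (A W - v)) * H) ≤
        Matrix.trace ((C + Aadj y + β • Aadj (A W - v)) * Z)) :
    Lag C A v β ((1 - η) • W + η • H) y - Matrix.trace (C * Wstar) ≤
      (1 - η) * (Lag C A v β W y - Matrix.trace (C * Wstar)) -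
        β * η / 2 * ‖A W - v‖ ^ 2 + β * η ^ 2 / 2 * opNorm A ^ 2 * (p : ℝ) ^ 2 :=
  fw_one_step_descent_general C A Aadj hadj v β hβ η hη0 y W hW Wstar hWstar hfeas H hHmem hHmin
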